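/- (Tight error bound for an almost-everywhere-correct classifier.) Suppose Z is partitioned into two measurable sets Z_1 and Z_2 with P(Z_1) > 0 and P(Z_2) > 0, the loss \ell_h takes values in \{0,1\}, and \ell_h(z) = 0 for all z \in Z_2. Let n_1 be the number of samples of S falling in Z_1. Then for n i.i.d. samples S from P and any \delta > 0, with probability at least 1 - \delta: F(P,h) \le 3 \sqrt{ 2 \ln(4/\delta)/n } + 4 \ln(4/\delta)/n + (n_1/n) \, a_1(h), where a_1(h) = E_{z \sim P}[\ell_h(z) \mid z \in Z_1]. -/

import Mathlib

/-!
Since the loss vanishes off `Z1`, `F(P,h) = P(Z1) · a₁(h)` with `0 ≤ a₁(h) ≤ 1`. The count `n₁` is a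
sum of `n` independent Bernoulli(`P(Z1)`) indicators, so by Hoeffding's inequality
`n₁/n > P(Z1) - t`, `t = √(2 log(4/δ)/n)`, outside an event of probability at most `δ/4`; on the
complement, `P(Z1) · a₁ ≤ (n₁/n + t) · a₁ ≤ (n₁/n) · a₁ + t`.
-/

open MeasureTheory Finset

open scoped Classical in
/-- Number of sample points of `S` falling in the region `A`. -/
noncomputable def cnt {Z : Type*} {n : ℕ} (S : Fin n → Z) (A : Set Z) : ℕ :=
  (Finset.univ.filter (fun j => S j ∈ A)).card

/-- Indices of the regions that contain at least one sample point. -/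
noncomputable def Tset {Z : Type*} {n K : ℕ} (S : Fin n → Z) (Zpart : Fin K → Set Z) :
    Finset (Fin K) :=
  Finset.univ.filter (fun i => 0 < cnt S (Zpart i))

/-- Empirical loss of `ℓ` on the sample `S`. -/
noncomputable def empLoss {Z : Type*} {n : ℕ} (ℓ : Z → ℝ) (S : Fin n → Z) : ℝ :=
  (∑ j, ℓ (S j)) / n

open scoped Classical in
/-- Empirical loss of `ℓ` on the subsample of `S` lying in `A`. -/
noncomputable def empLossIn {Z : Type*} {n : ℕ} (ℓ : Z → ℝ) (S : Fin n → Z) (A : Set Z) : ℝ :=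
  (∑ j ∈ Finset.univ.filter (fun j => S j ∈ A), ℓ (S j)) / (cnt S A : ℝ)

/-- Conditional expectation `E[ℓ z ∣ z ∈ A]`. -/
noncomputable def condAvg {Z : Type*} [MeasurableSpace Z] (P : Measure Z) (ℓ : Z → ℝ)
    (A : Set Z) : ℝ :=
  (∫ z in A, ℓ z ∂P) / (P A).toReal

/-- Worst-case local robustness level `sup_{s ∈ S ∩ A, z ∈ A} |ℓ s - ℓ z|`. -/
noncomputable def epsSup {Z : Type*} {n : ℕ} (ℓ : Z → ℝ) (S : Fin n → Z) (A : Set Z) : ℝ :=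
  sSup {x : ℝ | ∃ j : Fin n, S j ∈ A ∧ ∃ z ∈ A, x = |ℓ (S j) - ℓ z|}

open scoped Classical in
/-- Average local sensitivity `(1/n_i) ∑_{s ∈ S ∩ A} E[|ℓ z - ℓ s| ∣ z ∈ A]`. -/
noncomputable def epsBar {Z : Type*} [MeasurableSpace Z] {n : ℕ} (P : Measure Z) (ℓ : Z → ℝ)
    (S : Fin n → Z) (A : Set Z) : ℝ :=
  (∑ j ∈ Finset.univ.filter (fun j => S j ∈ A),
    condAvg P (fun z => |ℓ z - ℓ (S j)|) A) / (cnt S A : ℝ)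

open ProbabilityTheory

lemma cnt_eq_sum_indicator {Z : Type*} {n : ℕ} (S : Fin n → Z) (A : Set Z) :
    (cnt S A : ℝ) = ∑ j, A.indicator 1 (S j) := by
  classical
  rw [cnt, Finset.card_filter]
  push_cast
  simp only [Set.indicator_apply, Pi.one_apply]

lemma hasSubgaussianMGF_measureReal_sub_indicator {Z : Type*} [MeasurableSpace Z]
    (P : Measure Z) [IsProbabilityMeasure P] {A : Set Z} (hA : MeasurableSet A) :
    HasSubgaussianMGF (fun z => P.real A - A.indicator 1 z) ((1 / 2) ^ 2) P := by
  have h := hasSubgaussianMGF_of_mem_Icc_of_integral_eq_zero (μ := P)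
    (X := fun z => P.real A - A.indicator 1 z) (a := P.real A - 1) (b := P.real A)
    (by fun_prop) (ae_of_all _ fun z => ?_) ?_
  · convert h
    ext; simp
  · by_cases hz : z ∈ A <;> simp [hz]
  · rw [integral_sub (integrable_const _) ((integrable_const 1).indicator hA),
      integral_indicator_one hA]
    simp

lemma measureReal_cnt_le_sub_le {Z : Type*} [MeasurableSpace Z] (P : Measure Z)
    [IsProbabilityMeasure P] {A : Set Z} (hA : MeasurableSet A) (n : ℕ) {ε : ℝ} (hε : 0 ≤ ε) :
    (Measure.pi fun _ : Fin n => P).real {S | (cnt S A : ℝ) ≤ n * P.real A - ε} ≤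
      Real.exp (-2 * ε ^ 2 / n) := by
  set X : Fin n → (Fin n → Z) → ℝ := fun j S => P.real A - A.indicator 1 (S j)
  have h_indep : iIndepFun X (Measure.pi fun _ : Fin n => P) :=
    iIndepFun_pi (X := fun _ z => P.real A - A.indicator 1 z) fun _ => by fun_prop
  have h_subG : ∀ j ∈ (Finset.univ : Finset (Fin n)),
      HasSubgaussianMGF (X j) ((1 / 2) ^ 2) (Measure.pi fun _ : Fin n => P) := by
    intro j _
    refine HasSubgaussianMGF.of_map (X := fun z => P.real A - A.indicator 1 z)
      (Y := fun S : Fin n → Z => S j) (measurable_pi_apply j).aemeasurable ?_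
    rw [(measurePreserving_eval (fun _ : Fin n => P) j).map_eq]
    exact hasSubgaussianMGF_measureReal_sub_indicator P hA
  have h := HasSubgaussianMGF.measure_sum_ge_le_of_iIndepFun h_indep h_subG hε
  have hset : {S : Fin n → Z | (cnt S A : ℝ) ≤ n * P.real A - ε} = {S | ε ≤ ∑ j, X j S} := by
    ext S
    simp only [cnt_eq_sum_indicator, Set.mem_ofPred_eq, sum_sub_distrib, sum_const, card_univ,
      Fintype.card_fin, nsmul_eq_mul, X]
    constructor <;> intro <;> linarith
  rw [hset]
  refine h.trans_eq ?_
  congr 1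
  simp only [one_div, inv_pow, sum_const, card_univ, Fintype.card_fin, nsmul_eq_mul,
    NNReal.coe_mul, NNReal.coe_natCast, NNReal.coe_inv, NNReal.coe_pow, NNReal.coe_ofNat, neg_mul]
  ring

lemma measureReal_cnt_div_le_sub_sqrt_le {Z : Type*} [MeasurableSpace Z] (P : Measure Z)
    [IsProbabilityMeasure P] {A : Set Z} (hA : MeasurableSet A) {n : ℕ} (hn : 0 < n) {δ : ℝ}
    (hδ : 0 < δ) (hδ4 : δ ≤ 4) :
    (Measure.pi fun _ : Fin n => P).real
        {S | (cnt S A : ℝ) / n ≤ P.real A - Real.sqrt (2 * Real.log (4 / δ) / n)} ≤ δ / 4 := by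
  set L := Real.log (4 / δ)
  set t := Real.sqrt (2 * L / n)
  have hn' : (0 : ℝ) < n := by exact_mod_cast hn
  have hL : 0 ≤ L := Real.log_nonneg (by rw [le_div_iff₀ hδ]; linarith)
  have ht : t ^ 2 = 2 * L / n := Real.sq_sqrt (by positivity)
  have hset : {S : Fin n → Z | (cnt S A : ℝ) / n ≤ P.real A - t} =
      {S | (cnt S A : ℝ) ≤ n * P.real A - n * t} := by
    ext S
    simp only [Set.mem_ofPred_eq, div_le_iff₀ hn']
    constructor <;> intro <;> linarith
  calc _ ≤ Real.exp (-2 * (n * t) ^ 2 / n) := by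
        rw [hset]
        exact measureReal_cnt_le_sub_le P hA n (by positivity)
    _ ≤ Real.exp (-L) := by
        gcongr
        rw [mul_pow, ht]
        field_simp
        linarith
    _ = δ / 4 := by rw [Real.exp_neg, Real.exp_log (by positivity), inv_div]

lemma integral_eq_measureReal_mul_condAvg {Z : Type*} [MeasurableSpace Z] (P : Measure Z)
    [IsFiniteMeasure P] {ℓ : Z → ℝ} {A : Set Z} (hℓ : ∀ z ∉ A, ℓ z = 0) :
    ∫ z, ℓ z ∂P = P.real A * condAvg P ℓ A := by
  rw [condAvg, ← measureReal_def, ← setIntegral_eq_integral_of_forall_compl_eq_zero hℓ]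
  rcases eq_or_ne (P.real A) 0 with h | h
  · rw [h, zero_mul, Measure.restrict_eq_zero.2 ((measureReal_eq_zero_iff).1 h),
      integral_zero_measure]
  · rw [mul_div_cancel₀ _ h]

lemma condAvg_nonneg {Z : Type*} [MeasurableSpace Z] (P : Measure Z) {ℓ : Z → ℝ}
    (hℓ : ∀ z, 0 ≤ ℓ z) (A : Set Z) : 0 ≤ condAvg P ℓ A :=
  div_nonneg (integral_nonneg hℓ) ENNReal.toReal_nonneg

lemma condAvg_le_one {Z : Type*} [MeasurableSpace Z] (P : Measure Z) [IsFiniteMeasure P]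
    {ℓ : Z → ℝ} (hℓ0 : ∀ z, 0 ≤ ℓ z) (hℓ1 : ∀ z, ℓ z ≤ 1) (A : Set Z) : condAvg P ℓ A ≤ 1 := by
  refine div_le_one_of_le₀ ?_ ENNReal.toReal_nonneg
  calc ∫ z in A, ℓ z ∂P ≤ ∫ _ in A, (1 : ℝ) ∂P :=
        integral_mono_of_nonneg (ae_of_all _ hℓ0) (integrable_const 1) (ae_of_all _ hℓ1)
    _ = (P A).toReal := by simp [measureReal_def]

lemma ofReal_one_sub_le_of_compl_subset {Ω : Type*} [MeasurableSpace Ω] {μ : Measure Ω}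
    [IsProbabilityMeasure μ] {s t : Set Ω} {δ : ℝ} (hs : μ.real s ≤ δ) (hst : sᶜ ⊆ t) :
    ENNReal.ofReal (1 - δ) ≤ μ t := by
  refine ENNReal.ofReal_le_of_le_toReal ?_
  have h := measureReal_union_le (μ := μ) s sᶜ
  rw [Set.union_compl_self, probReal_univ] at h
  have := measureReal_mono (μ := μ) hst
  rw [← measureReal_def]
  linarith

theorem statement15_general {Z : Type*} [MeasurableSpace Z] (P : Measure Z) [IsProbabilityMeasure P]
    (Z1 Z2 : Set Z) (hZ1 : MeasurableSet Z1)
    (hZcover : Z1 ∪ Z2 = Set.univ)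
    (ℓ : Z → ℝ)
    (hvals : ∀ z, ℓ z = 0 ∨ ℓ z = 1)
    (hzero : ∀ z ∈ Z2, ℓ z = 0)
    {n : ℕ} (hn : 0 < n) (δ : ℝ) (hδ : 0 < δ) :
    ENNReal.ofReal (1 - δ) ≤
      (Measure.pi fun _ : Fin n => P)
        {S | ∫ z, ℓ z ∂P ≤
          3 * Real.sqrt (2 * Real.log (4 / δ) / n) + 4 * Real.log (4 / δ) / n
            + ((cnt S Z1 : ℝ) / n) * condAvg P ℓ Z1} := by
  rcases le_or_gt 1 δ with hδ1 | hδ1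
  · simp [ENNReal.ofReal_eq_zero.2 (sub_nonpos.2 hδ1)]
  have hℓ0 : ∀ z, 0 ≤ ℓ z := fun z => by rcases hvals z with h | h <;> simp [h]
  have hℓ1 : ∀ z, ℓ z ≤ 1 := fun z => by rcases hvals z with h | h <;> simp [h]
  have hoff : ∀ z ∉ Z1, ℓ z = 0 := fun z hz =>
    hzero z (((Set.mem_union z Z1 Z2).1 (hZcover ▸ Set.mem_univ z)).resolve_left hz)
  have ha0 := condAvg_nonneg P hℓ0 Z1
  have ha1 := condAvg_le_one P hℓ0 hℓ1 Z1
  have hL : 0 ≤ 4 * Real.log (4 / δ) / n := by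
    have : 0 ≤ Real.log (4 / δ) := Real.log_nonneg (by rw [le_div_iff₀ hδ]; linarith)
    positivity
  refine ofReal_one_sub_le_of_compl_subset
    ((measureReal_cnt_div_le_sub_sqrt_le P hZ1 hn hδ (by linarith)).trans (by linarith)) ?_
  intro S hS
  simp only [Set.mem_compl_iff, Set.mem_ofPred_eq, not_le] at hS ⊢
  rw [integral_eq_measureReal_mul_condAvg P hoff]
  have ht := Real.sqrt_nonneg (2 * Real.log (4 / δ) / n)
  linarith [mul_le_mul_of_nonneg_right hS.le ha0, mul_le_of_le_one_right ht ha1]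

/-- Tight error bound for an almost-everywhere-correct classifier. -/
theorem statement15 {Z : Type*} [MeasurableSpace Z] (P : Measure Z) [IsProbabilityMeasure P]
    (Z1 Z2 : Set Z) (hZ1 : MeasurableSet Z1) (hZ2 : MeasurableSet Z2)
    (hZdisj : Disjoint Z1 Z2) (hZcover : Z1 ∪ Z2 = Set.univ)
    (hZ1pos : 0 < P Z1) (hZ2pos : 0 < P Z2)
    (ℓ : Z → ℝ) (hℓmeas : Measurable ℓ)
    (hvals : ∀ z, ℓ z = 0 ∨ ℓ z = 1)
    (hzero : ∀ z ∈ Z2, ℓ z = 0)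
    {n : ℕ} (hn : 0 < n) (δ : ℝ) (hδ : 0 < δ) :
    ENNReal.ofReal (1 - δ) ≤
      (Measure.pi fun _ : Fin n => P)
        {S | ∫ z, ℓ z ∂P ≤
          3 * Real.sqrt (2 * Real.log (4 / δ) / n) + 4 * Real.log (4 / δ) / n
            + ((cnt S Z1 : ℝ) / n) * condAvg P ℓ Z1} :=
  statement15_general P Z1 Z2 hZ1 hZcover ℓ hvals hzero hn δ hδ
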